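/- arXiv:2604.14323 — 6 statements merged into one kernel-verified Lean document; each statement's English description precedes it below -/
import Mathlib

section
/- Fix integers m ≥ 2, n ≥ 0 and 0 ≤ k ≤ n. Then Σ_{j=0}^{k} (−1)^j C(k,j) (n−k+1)_j (m+k−1)_{k−j} / (m+n)_k = ((m+n−1)! / ((n−k)!·(m+k−2)!)) · ∫_0^1 x^{n−k} (1−x)^{m+k−2} (1−2x)^k dx. In other words, the coefficient T_k appearing in the closed form of the average outcome-collision probability equals the moment E[(1−2X)^k] for X distributed as Beta(n−k+1, m+k−1). -/
open Finset intervalIntegral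

/-- Pochhammer symbol `(x)_p = x (x+1) ⋯ (x+p-1)`. -/
noncomputable def poch (x : ℝ) (p : ℕ) : ℝ := ∏ i ∈ Finset.range p, (x + i)

/-!
Write `1 - 2x = (1 - x) - x` and expand `(1 - 2x)^k` binomially: the integral becomes a signed sum
of Beta integrals `∫₀¹ x^(n-k+j) (1-x)^(m+2k-2-j) dx`, each a quotient of factorials. At natural
arguments the Pochhammer symbols are quotients of factorials as well, and the two sides agree
term by term.
-/

open Nat

lemma poch_natCast_add_one (a p : ℕ) : poch (a + 1) p = (a + p)! / a ! := by
  have hasc : poch (a + 1) p = ((a + 1).ascFactorial p : ℝ) := by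
    simp only [poch, Nat.ascFactorial_eq_prod_range]
    push_cast
    rfl
  rw [hasc, eq_div_iff (by positivity), mul_comm]
  exact_mod_cast Nat.factorial_mul_ascFactorial a p

lemma integral_pow_mul_one_sub_pow (a b : ℕ) :
    ∫ x in (0 : ℝ)..1, x ^ a * (1 - x) ^ b = (a ! * b ! / (a + b + 1)! : ℝ) := by
  have hbeta := Complex.Gamma_mul_Gamma_eq_betaIntegral (s := a + 1) (t := b + 1)
    (by simp; positivity) (by simp; positivity)
  have hsum : (a + 1 : ℂ) + (b + 1) = ((a + b + 1 : ℕ) : ℂ) + 1 := by push_cast; ring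
  rw [hsum, Complex.Gamma_nat_eq_factorial, Complex.Gamma_nat_eq_factorial,
    Complex.Gamma_nat_eq_factorial, Complex.betaIntegral] at hbeta
  have hreal : ∫ x in (0 : ℝ)..1, (x : ℂ) ^ ((a : ℂ) + 1 - 1) * (1 - (x : ℂ)) ^ ((b : ℂ) + 1 - 1)
      = ((∫ x in (0 : ℝ)..1, x ^ a * (1 - x) ^ b : ℝ) : ℂ) := by
    rw [← intervalIntegral.integral_ofReal]
    refine intervalIntegral.integral_congr fun x _ => ?_
    simp only [add_sub_cancel_right, Complex.cpow_natCast]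
    push_cast
    rfl
  rw [hreal] at hbeta
  rw [eq_div_iff (by positivity), mul_comm]
  exact_mod_cast hbeta.symm

lemma one_sub_two_mul_pow_eq_sum (x : ℝ) (k : ℕ) :
    (1 - 2 * x) ^ k
      = ∑ j ∈ range (k + 1), (-1) ^ j * (k.choose j : ℝ) * (x ^ j * (1 - x) ^ (k - j)) := by
  rw [show 1 - 2 * x = -x + (1 - x) by ring, add_pow]
  refine sum_congr rfl fun j _ => ?_
  rw [neg_pow]
  ring

lemma integral_pow_mul_one_sub_pow_mul_one_sub_two_mul_pow (a b k : ℕ) :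
    ∫ x in (0 : ℝ)..1, x ^ a * (1 - x) ^ b * (1 - 2 * x) ^ k
      = ∑ j ∈ range (k + 1),
          (-1) ^ j * (k.choose j : ℝ) * ((a + j)! * (b + (k - j))! / (a + b + k + 1)!) := by
  have hexpand : ∀ x : ℝ, x ^ a * (1 - x) ^ b * (1 - 2 * x) ^ k
      = ∑ j ∈ range (k + 1),
          (-1) ^ j * (k.choose j : ℝ) * (x ^ (a + j) * (1 - x) ^ (b + (k - j))) := by
    intro x
    rw [one_sub_two_mul_pow_eq_sum, mul_sum]
    refine sum_congr rfl fun j _ => ?_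
    ring
  simp_rw [hexpand]
  rw [intervalIntegral.integral_finsetSum fun j _ =>
    (by fun_prop : Continuous _).intervalIntegrable _ _]
  refine sum_congr rfl fun j hj => ?_
  have hjk : j ≤ k := Nat.lt_succ_iff.mp (mem_range.mp hj)
  rw [intervalIntegral.integral_const_mul, integral_pow_mul_one_sub_pow,
    show a + j + (b + (k - j)) + 1 = a + b + k + 1 by omega]

/-- The coefficient `T_k` in the closed form of the average
outcome-collision probability equals the moment `E[(1-2X)^k]` for
`X ∼ Beta(n-k+1, m+k-1)`. -/
theorem stmt4 (m n k : ℕ) (hm : 2 ≤ m) (hk : k ≤ n) :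
    (∑ j ∈ Finset.range (k + 1),
        (-1 : ℝ) ^ j * (k.choose j : ℝ) * poch ((n : ℝ) - k + 1) j *
          poch ((m : ℝ) + k - 1) (k - j)) / poch ((m : ℝ) + n) k
      = (((m + n - 1).factorial : ℝ) / (((n - k).factorial : ℝ) * ((m + k - 2).factorial : ℝ)))
          * ∫ x in (0:ℝ)..1, x ^ (n - k) * (1 - x) ^ (m + k - 2) * (1 - 2 * x) ^ k := by
  have ha : (n : ℝ) - k + 1 = (n - k : ℕ) + 1 := by rw [Nat.cast_sub hk]
  have hb : (m : ℝ) + k - 1 = (m + k - 2 : ℕ) + 1 := by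
    rw [Nat.cast_sub (by omega)]; push_cast; ring
  have hc : (m : ℝ) + n = (m + n - 1 : ℕ) + 1 := by
    rw [Nat.cast_sub (by omega)]; push_cast; ring
  have hsum : n - k + (m + k - 2) + k + 1 = m + n - 1 + k := by omega
  rw [ha, hb, hc, integral_pow_mul_one_sub_pow_mul_one_sub_two_mul_pow, hsum,
    poch_natCast_add_one, mul_sum, sum_div]
  refine sum_congr rfl fun j _ => ?_
  rw [poch_natCast_add_one, poch_natCast_add_one]
  field_simp
end

section
/- (Dilute regime.) Let c > 0 and β > 2 be reals, and let m : ℕ → ℕ be a sequence with m(n)/n^β → c. Then P₂(m(n), n)/n → 1 as n → ∞. -/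
/-!
With `K = n + m - 2` and `I K q = ∫₀^{π/2} cos θ ^ K * sin (q θ) dθ` we have
`P₂(m, n) = (K + 1) * I K (n + 1)`. Integration by parts gives the two-step recurrence
`(K + q + 2) * I K (q + 2) = 2 + (K - q) * I K q`, and induction on `q` along it yields
`q - q³ / (K + 1) ≤ (K + 1) * I K q ≤ q` for `q ≤ K + 1`. Hence `P₂(m, n) = n + 1 + O(n³ / m)`,
which is `n + o(n)` as soon as `m(n) / n² → ∞`; this holds when `m(n) ~ c n^β` with `β > 2`.
-/

open Filter Real

/-- The normalized average outcome-collision probability of an `n`-photon, `m`-mode Fock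
boson sampler averaged over Haar-random interferometers (integral representation). -/
noncomputable def P2 (m n : ℕ) : ℝ :=
  ((n : ℝ) + m - 1) *
    ∫ θ in (0:ℝ)..(Real.pi / 2), Real.cos θ ^ (n + m - 2) * Real.sin ((n + 1) * θ)

open intervalIntegral Topology

noncomputable def cosPowMulSinIntegral (K : ℕ) (q : ℝ) : ℝ :=
  ∫ θ in (0:ℝ)..π / 2, cos θ ^ K * sin (q * θ)

local notation "I" => cosPowMulSinIntegral

theorem cosPowMulSinIntegral_neg (K : ℕ) (q : ℝ) : I K (-q) = -I K q := by
  simp only [cosPowMulSinIntegral, neg_mul, sin_neg, mul_neg, intervalIntegral.integral_neg]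

/-- Integration by parts against `cos θ ^ (K + 1) * cos ((q + 1) θ)`, which equals `1` at `0`
and vanishes at `π / 2`. -/
theorem cosPowMulSinIntegral_add_two (K : ℕ) (q : ℝ) :
    (K + q + 2) * I K (q + 2) = 2 + (K - q) * I K q := by
  have hderiv : ∀ θ ∈ Set.uIcc 0 (π / 2),
      HasDerivAt (fun θ => cos θ ^ (K + 1) * cos ((q + 1) * θ))
        ((K - q) / 2 * (cos θ ^ K * sin (q * θ))
          - (K + q + 2) / 2 * (cos θ ^ K * sin ((q + 2) * θ))) θ := by
    intro θ _
    have hpow : HasDerivAt (fun θ => cos θ ^ (K + 1)) ((K + 1) * cos θ ^ K * -sin θ) θ := by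
      simpa using (hasDerivAt_cos θ).fun_pow (K + 1)
    have hcos : HasDerivAt (fun θ => cos ((q + 1) * θ)) (-sin ((q + 1) * θ) * (q + 1)) θ := by
      simpa using ((hasDerivAt_id θ).const_mul (q + 1)).cos
    refine (hpow.mul hcos).congr_deriv ?_
    rw [show (q + 2) * θ = (q + 1) * θ + θ by ring, show q * θ = (q + 1) * θ - θ by ring,
      sin_add, sin_sub]
    ring
  have hint : ∀ p : ℝ, IntervalIntegrable (fun θ => cos θ ^ K * sin (p * θ)) MeasureTheory.volume
      0 (π / 2) := fun p => by apply Continuous.intervalIntegrable; fun_prop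
  have hFTC := integral_eq_sub_of_hasDerivAt hderiv
    (((hint q).const_mul _).sub ((hint (q + 2)).const_mul _))
  rw [integral_sub ((hint q).const_mul _) ((hint (q + 2)).const_mul _), integral_const_mul,
    integral_const_mul] at hFTC
  simp only [cos_pi_div_two, mul_zero, cos_zero] at hFTC
  simp only [cosPowMulSinIntegral]
  norm_num at hFTC
  linarith

theorem cosPowMulSinIntegral_zero (K : ℕ) : I K 0 = 0 := by simp [cosPowMulSinIntegral]

theorem cosPowMulSinIntegral_one (K : ℕ) : I K 1 = 1 / (K + 1) := by
  -- the recurrence at `q = -1`, where `I K (-1) = -I K 1`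
  have h := cosPowMulSinIntegral_add_two K (-1)
  rw [cosPowMulSinIntegral_neg, show (-1 : ℝ) + 2 = 1 by norm_num] at h
  field_simp
  linarith

theorem cosPowMulSinIntegral_bounds (K : ℕ) {q : ℕ} (hq : q ≤ K + 1) :
    0 ≤ q - (K + 1) * I K q ∧ q - (K + 1) * I K q ≤ (q : ℝ) ^ 3 / (K + 1) := by
  induction q using Nat.twoStepInduction with
  | zero => simp [cosPowMulSinIntegral_zero]
  | one =>
    have hK : (0 : ℝ) < K + 1 := by positivity
    rw [Nat.cast_one, cosPowMulSinIntegral_one, mul_one_div_cancel hK.ne', sub_self]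
    exact ⟨le_rfl, by positivity⟩
  | more q ih _ =>
    obtain ⟨hlo, hhi⟩ := ih (by omega)
    have hqK : (q : ℝ) + 1 ≤ K := by exact_mod_cast (by omega : q + 1 ≤ K)
    have hrec := cosPowMulSinIntegral_add_two K q
    push_cast
    set e := (q : ℝ) - (K + 1) * I K q
    have hpos : (0 : ℝ) < K + q + 2 := by positivity
    have he : q + 2 - (K + 1) * I K (q + 2) = (2 * (q + 1) ^ 2 + (K - q) * e) / (K + q + 2) := by
      rw [eq_div_iff hpos.ne']
      linear_combination (-(K:ℝ) - 1) * hrec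
    have hKq : (0 : ℝ) ≤ K - q := by linarith
    rw [he]
    refine ⟨by positivity, ?_⟩
    rw [le_div_iff₀ (by positivity)] at hhi
    rw [div_le_div_iff₀ hpos (by positivity)]
    have hq0 : (0 : ℝ) ≤ q := q.cast_nonneg
    nlinarith [mul_le_mul_of_nonneg_left hhi hKq, mul_nonneg hq0 hKq,
      mul_nonneg (mul_nonneg hq0 hq0) hKq]

theorem abs_P2_sub_le {m : ℕ} (n : ℕ) (hm : 2 ≤ m) :
    |P2 m n - (n + 1)| ≤ ((n : ℝ) + 1) ^ 3 / (n + m - 1) := by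
  have hbounds := cosPowMulSinIntegral_bounds (n + m - 2) (q := n + 1) (by omega)
  have hK : ((n + m - 2 : ℕ) : ℝ) + 1 = n + m - 1 := by
    rw [Nat.cast_sub (by omega)]
    push_cast
    ring
  rw [hK] at hbounds
  push_cast at hbounds
  rw [abs_le]
  constructor <;> simp only [P2, cosPowMulSinIntegral] at hbounds ⊢ <;> linarith

theorem abs_P2_div_sub_one_le {m n : ℕ} (hn : 1 ≤ n) (hm : 2 ≤ m) :
    |P2 m n / n - 1| ≤ 1 / n + 8 * n ^ 2 / m := by
  have hn' : (1 : ℝ) ≤ n := by exact_mod_cast hn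
  have hm' : (2 : ℝ) ≤ m := by exact_mod_cast hm
  have hn0 : (0 : ℝ) < n := by linarith
  have hD : (0 : ℝ) < n + m - 1 := by linarith
  have hsplit : P2 m n / n - 1 = (P2 m n - (n + 1)) / n + 1 / n := by field_simp; ring
  have herr : ((n : ℝ) + 1) ^ 3 / (n + m - 1) / n ≤ 8 * n ^ 2 / m := by
    rw [div_div, div_le_div_iff₀ (mul_pos hD hn0) (by positivity)]
    have hcube : ((n : ℝ) + 1) ^ 3 ≤ 8 * n ^ 3 :=
      calc ((n : ℝ) + 1) ^ 3 ≤ (2 * n : ℝ) ^ 3 := by gcongr; linarith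
        _ = 8 * (n : ℝ) ^ 3 := by ring
    nlinarith
  calc |P2 m n / n - 1| ≤ |P2 m n - (n + 1)| / n + 1 / n := by
        rw [hsplit]
        refine (abs_add_le _ _).trans_eq ?_
        rw [abs_div, abs_of_pos hn0, abs_of_pos (one_div_pos.mpr hn0)]
    _ ≤ ((n : ℝ) + 1) ^ 3 / (n + m - 1) / n + 1 / n := by
        gcongr
        exact abs_P2_sub_le n hm
    _ ≤ 1 / n + 8 * n ^ 2 / m := by linarith

theorem tendsto_P2_div_of_tendsto_div_sq_atTop {m : ℕ → ℕ}
    (hm : Tendsto (fun n : ℕ => (m n : ℝ) / n ^ 2) atTop atTop) :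
    Tendsto (fun n : ℕ => P2 (m n) n / n) atTop (𝓝 1) := by
  have hm2 : ∀ᶠ n in atTop, 2 ≤ m n := by
    filter_upwards [hm.eventually_ge_atTop 2, eventually_ge_atTop 1] with n hmn hn
    have hn' : (1 : ℝ) ≤ n := by exact_mod_cast hn
    rw [le_div_iff₀ (by positivity)] at hmn
    exact_mod_cast (by nlinarith : (2 : ℝ) ≤ m n)
  have hbound : Tendsto (fun n : ℕ => 1 / (n : ℝ) + 8 * (n ^ 2 / m n)) atTop (𝓝 0) := by
    have := tendsto_one_div_atTop_nhds_zero_nat.add (hm.inv_tendsto_atTop.const_mul 8)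
    simpa [inv_div] using this
  refine tendsto_sub_nhds_zero_iff.mp (squeeze_zero_norm' ?_ hbound)
  filter_upwards [hm2, eventually_ge_atTop 1] with n hmn hn
  rw [Real.norm_eq_abs, ← mul_div_assoc]
  exact abs_P2_div_sub_one_le hn hmn

/-- Dilute regime. If `m n / n^β → c` with `β > 2`, then
`P₂(m n, n)/n → 1`. -/
theorem stmt7 (c β : ℝ) (hc : 0 < c) (hβ : 2 < β) (m : ℕ → ℕ)
    (hm : Tendsto (fun n : ℕ => (m n : ℝ) / (n : ℝ) ^ β) atTop (nhds c)) :
    Tendsto (fun n : ℕ => P2 (m n) n / n) atTop (nhds 1) := by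
  refine tendsto_P2_div_of_tendsto_div_sq_atTop ?_
  have hpow : Tendsto (fun n : ℕ => (n : ℝ) ^ (β - 2)) atTop atTop :=
    (tendsto_rpow_atTop (by linarith)).comp tendsto_natCast_atTop_atTop
  refine (hm.pos_mul_atTop hc hpow).congr' ?_
  filter_upwards [eventually_ge_atTop 1] with n hn
  have hn' : (0 : ℝ) < n := by exact_mod_cast hn
  rw [rpow_sub hn', rpow_two]
  field_simp
end

section
/- (Quadratic regime.) Let c > 0 be a real and let m : ℕ → ℕ be a sequence with m(n)/n² → c. Then P₂(m(n), n)/n → √(2c) · D₊(1/√(2c)) as n → ∞, where D₊(y) := (1/2) ∫_0^{∞} exp(−t²/4) · sin(yt) dt is the Dawson function. -/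
/-!
The substitution θ = t / n turns `P2 m n / n` into
`(n + m - 1) / n² · ∫₀^{nπ/2} cos (t/n)^(n+m-2) sin ((n+1) t/n) dt`.
Since `log (cos s) ~ -s²/2`, the integrand tends to `exp (-c t²/2) sin t`, and the bound
`cos x ≤ 1 - 2x²/π²` dominates it by a Gaussian, so dominated convergence gives the limit
`c ∫₀^∞ exp (-c t²/2) sin t dt`, which is `√(2c) D₊(1/√(2c))` after rescaling `t`.
-/

open Filter Real MeasureTheory

/-- The Dawson function `D₊(y) = (1/2) ∫_0^∞ exp(-t²/4) sin(y t) dt`. -/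
noncomputable def dawson (y : ℝ) : ℝ :=
  (1 / 2) * ∫ t in Set.Ioi (0:ℝ), Real.exp (-t ^ 2 / 4) * Real.sin (y * t)

open Set Topology

theorem tendsto_log_cos_div_sq :
    Tendsto (fun s : ℝ => log (cos s) / s ^ 2) (𝓝[≠] 0) (𝓝 (-1 / 2)) := by
  -- squeeze `1 - x⁻¹ ≤ log x ≤ x - 1` at `x = cos s` between the quadratic and quartic
  -- Taylor bounds of `cos`
  have hcos : Tendsto cos (𝓝[≠] 0) (𝓝 1) :=
    (continuous_cos.tendsto' 0 1 cos_zero).mono_left nhdsWithin_le_nhds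
  have hlower : Tendsto (fun s : ℝ => -1 / (2 * cos s)) (𝓝[≠] 0) (𝓝 (-1 / 2)) := by
    have h := (tendsto_const_nhds (x := (-1 : ℝ))).div (hcos.const_mul 2) (by norm_num)
    rwa [mul_one] at h
  have hupper : Tendsto (fun s : ℝ => -1 / 2 + 5 / 96 * s ^ 2) (𝓝[≠] 0) (𝓝 (-1 / 2)) := by
    have : Tendsto (fun s : ℝ => s) (𝓝[≠] 0) (𝓝 0) := tendsto_nhdsWithin_of_tendsto_nhds tendsto_id
    simpa using ((this.pow 2).const_mul (5 / 96)).const_add (-1 / 2)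
  have hnear : ∀ᶠ s in 𝓝[≠] (0 : ℝ), s ≠ 0 ∧ |s| ≤ 1 ∧ 0 < cos s := by
    have hball : ∀ᶠ s in 𝓝 (0 : ℝ), |s| ≤ 1 := by
      filter_upwards [Icc_mem_nhds (by norm_num : (-1 : ℝ) < 0) one_pos] with s hs
      exact abs_le.mpr hs
    have hpos : ∀ᶠ s in 𝓝 (0 : ℝ), 0 < cos s :=
      (continuous_cos.tendsto' 0 1 cos_zero).eventually (lt_mem_nhds one_pos)
    filter_upwards [self_mem_nhdsWithin, nhdsWithin_le_nhds hball, nhdsWithin_le_nhds hpos]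
      with s hs h1 h2
    exact ⟨hs, h1, h2⟩
  refine tendsto_of_tendsto_of_tendsto_of_le_of_le' hlower hupper ?_ ?_
  · filter_upwards [hnear] with s hs
    obtain ⟨hs0, -, hpos⟩ := hs
    rw [le_div_iff₀ (by positivity)]
    calc -1 / (2 * cos s) * s ^ 2 = -(s ^ 2 / 2) / cos s := by ring
      _ ≤ (cos s - 1) / cos s := by gcongr; linarith [one_sub_sq_div_two_le_cos (x := s)]
      _ = 1 - (cos s)⁻¹ := by field_simp
      _ ≤ log (cos s) := one_sub_inv_le_log_of_pos hpos
  · filter_upwards [hnear] with s hs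
    obtain ⟨hs0, hs1, hpos⟩ := hs
    rw [div_le_iff₀ (by positivity)]
    have hlog := log_le_sub_one_of_pos hpos
    have hbound := (abs_le.mp (cos_bound hs1)).2
    have h4 : |s| ^ 4 = (s ^ 2) ^ 2 := by rw [show 4 = 2 * 2 from rfl, pow_mul, sq_abs]
    nlinarith

theorem tendsto_cos_div_natCast_pow {c t : ℝ} (ht : t ≠ 0) {N : ℕ → ℕ}
    (hN : Tendsto (fun n : ℕ => (N n : ℝ) / (n : ℝ) ^ 2) atTop (𝓝 c)) :
    Tendsto (fun n : ℕ => cos (t / n) ^ N n) atTop (𝓝 (exp (-(c * t ^ 2 / 2)))) := by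
  have hs : Tendsto (fun n : ℕ => t / n) atTop (𝓝[≠] 0) := by
    refine tendsto_nhdsWithin_iff.mpr ⟨tendsto_const_div_atTop_nhds_zero_nat t, ?_⟩
    filter_upwards [eventually_gt_atTop 0] with n hn
    exact div_ne_zero ht (Nat.cast_ne_zero.mpr hn.ne')
  have hlog : Tendsto (fun n : ℕ => N n * log (cos (t / n))) atTop (𝓝 (-(c * t ^ 2 / 2))) := by
    have h := (hN.mul (tendsto_log_cos_div_sq.comp hs)).mul_const (t ^ 2)
    rw [show c * (-1 / 2) * t ^ 2 = -(c * t ^ 2 / 2) by ring] at h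
    refine h.congr' ?_
    filter_upwards [eventually_gt_atTop 0] with n hn
    simp only [Function.comp_apply]
    field_simp
  have hpos : ∀ᶠ n : ℕ in atTop, 0 < cos (t / n) :=
    ((continuous_cos.tendsto' 0 1 cos_zero).comp (hs.mono_right nhdsWithin_le_nhds)).eventually
      (lt_mem_nhds one_pos)
  refine ((continuous_exp.tendsto _).comp hlog).congr' ?_
  filter_upwards [hpos] with n hn
  rw [Function.comp_apply, exp_nat_mul, exp_log hn]

theorem cos_pow_le_exp_neg_mul_sq {x : ℝ} (hx : |x| ≤ π / 2) (k : ℕ) :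
    cos x ^ k ≤ exp (-(2 * k / π ^ 2 * x ^ 2)) := by
  have hcos : 0 ≤ cos x := cos_nonneg_of_mem_Icc (abs_le.mp hx)
  calc cos x ^ k ≤ exp (-(2 / π ^ 2 * x ^ 2)) ^ k := by
        gcongr
        calc cos x ≤ 1 - 2 / π ^ 2 * x ^ 2 := cos_le_one_sub_mul_cos_sq (by linarith [pi_pos])
          _ ≤ _ := by linarith [add_one_le_exp (-(2 / π ^ 2 * x ^ 2))]
    _ = _ := by rw [← exp_nat_mul]; ring_nf

theorem norm_indicator_cos_div_pow_mul_sin_le {c : ℝ} {n N : ℕ} (hn : 0 < n)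
    (hN : c * n ^ 2 ≤ 2 * N) (t : ℝ) :
    ‖(Ioc 0 (n * (π / 2))).indicator (fun t => cos (t / n) ^ N * sin ((n + 1) * (t / n))) t‖
      ≤ exp (-(c / π ^ 2 * t ^ 2)) := by
  by_cases ht : t ∈ Ioc 0 (n * (π / 2))
  · have hn' : (0 : ℝ) < n := Nat.cast_pos.mpr hn
    have htn : |t / n| ≤ π / 2 := by
      rw [abs_of_pos (div_pos ht.1 hn'), div_le_iff₀ hn']
      linarith [ht.2]
    have hcos : 0 ≤ cos (t / n) := cos_nonneg_of_mem_Icc (abs_le.mp htn)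
    have hexponent : c / π ^ 2 * t ^ 2 ≤ 2 * N / π ^ 2 * (t / n) ^ 2 := by
      rw [show c / π ^ 2 * t ^ 2 = c * n ^ 2 / π ^ 2 * (t / n) ^ 2 by field_simp]
      gcongr
    rw [indicator_of_mem ht, norm_mul, norm_pow, Real.norm_eq_abs, Real.norm_eq_abs,
      abs_of_nonneg hcos]
    calc cos (t / n) ^ N * |sin ((n + 1) * (t / n))| ≤ cos (t / n) ^ N := by
          nlinarith [abs_sin_le_one ((n + 1) * (t / n)), pow_nonneg hcos N]
      _ ≤ exp (-(2 * N / π ^ 2 * (t / n) ^ 2)) := cos_pow_le_exp_neg_mul_sq htn N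
      _ ≤ exp (-(c / π ^ 2 * t ^ 2)) := by gcongr
  · rw [indicator_of_notMem ht, norm_zero]
    positivity

theorem tendsto_integral_Ioi_cos_div_pow_mul_sin {c : ℝ} (hc : 0 < c) {N : ℕ → ℕ}
    (hN : Tendsto (fun n : ℕ => (N n : ℝ) / (n : ℝ) ^ 2) atTop (𝓝 c)) :
    Tendsto (fun n : ℕ => ∫ t in Ioi 0, (Ioc 0 (n * (π / 2))).indicator
        (fun t => cos (t / n) ^ N n * sin ((n + 1) * (t / n))) t) atTop
      (𝓝 (∫ t in Ioi 0, exp (-(c * t ^ 2 / 2)) * sin t)) := by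
  have hbound : Integrable (fun t : ℝ => exp (-(c / π ^ 2 * t ^ 2))) (volume.restrict (Ioi 0)) := by
    simpa only [neg_mul] using (integrable_exp_neg_mul_sq (b := c / π ^ 2) (by positivity)).restrict
  refine tendsto_integral_filter_of_dominated_convergence _
    (Eventually.of_forall fun n => ?_) ?_ hbound ?_
  · exact (Continuous.aestronglyMeasurable (by fun_prop)).indicator measurableSet_Ioc
  · filter_upwards [hN.eventually (le_mem_nhds (half_lt_self hc)), eventually_gt_atTop 0]
      with n hNn hn
    rw [le_div_iff₀ (by positivity)] at hNn
    exact Eventually.of_forall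
      (norm_indicator_cos_div_pow_mul_sin_le hn (by linarith))
  · rw [ae_restrict_iff' measurableSet_Ioi]
    refine Eventually.of_forall fun t (ht : 0 < t) => ?_
    have hsin : Tendsto (fun n : ℕ => sin ((n + 1) * (t / n))) atTop (𝓝 (sin t)) := by
      have harg : Tendsto (fun n : ℕ => t + t / n) atTop (𝓝 t) := by
        simpa using tendsto_const_nhds.add (tendsto_const_div_atTop_nhds_zero_nat t)
      refine ((continuous_sin.tendsto t).comp harg).congr' ?_
      filter_upwards [eventually_gt_atTop 0] with n hn
      rw [Function.comp_apply]
      field_simp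
    have hlarge : ∀ᶠ n : ℕ in atTop, t ≤ n * (π / 2) :=
      (tendsto_natCast_atTop_atTop.atTop_mul_const pi_div_two_pos).eventually_ge_atTop t
    refine ((tendsto_cos_div_natCast_pow ht.ne' hN).mul hsin).congr' ?_
    filter_upwards [hlarge] with n hn
    rw [indicator_of_mem (show t ∈ Ioc 0 (n * (π / 2)) from ⟨ht, hn⟩)]

theorem intervalIntegral_eq_inv_mul_integral_Ioi_indicator (f : ℝ → ℝ) {a b : ℝ} (ha : 0 < a)
    (hb : 0 ≤ b) :
    ∫ θ in 0..b, f θ = a⁻¹ * ∫ t in Ioi 0, (Ioc 0 (a * b)).indicator (fun t => f (t / a)) t := by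
  rw [setIntegral_indicator measurableSet_Ioc, inter_eq_self_of_subset_right Ioc_subset_Ioi_self,
    ← intervalIntegral.integral_of_le (by positivity), intervalIntegral.integral_comp_div _ ha.ne',
    zero_div, mul_div_cancel_left₀ _ ha.ne', smul_eq_mul, inv_mul_cancel_left₀ ha.ne']

theorem tendsto_natCast_add_add_div_sq {m : ℕ → ℕ} {c : ℝ}
    (hm : Tendsto (fun n : ℕ => (m n : ℝ) / (n : ℝ) ^ 2) atTop (𝓝 c)) (a : ℝ) :
    Tendsto (fun n : ℕ => ((n : ℝ) + m n + a) / (n : ℝ) ^ 2) atTop (𝓝 c) := by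
  have hinv := tendsto_inv_atTop_nhds_zero_nat (𝕜 := ℝ)
  have h := (hinv.add ((hinv.pow 2).const_mul a)).add hm
  rw [zero_pow two_ne_zero, mul_zero, add_zero, zero_add] at h
  refine h.congr' ?_
  filter_upwards [eventually_gt_atTop 0] with n hn
  field_simp
  ring

theorem sqrt_two_mul_mul_dawson_one_div_sqrt {c : ℝ} (hc : 0 < c) :
    √(2 * c) * dawson (1 / √(2 * c)) = c * ∫ t in Ioi 0, exp (-(c * t ^ 2 / 2)) * sin t := by
  set b := √(2 * c)
  have hb : 0 < b := sqrt_pos.mpr (by linarith)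
  have hb2 : b ^ 2 = 2 * c := sq_sqrt (by linarith)
  have hsubst := integral_comp_mul_left_Ioi (fun t => exp (-t ^ 2 / 4) * sin (1 / b * t)) 0 hb
  have hintegrand : (fun t => exp (-(b * t) ^ 2 / 4) * sin (1 / b * (b * t)))
      = fun t => exp (-(c * t ^ 2 / 2)) * sin t := by
    funext t
    rw [one_div, inv_mul_cancel_left₀ hb.ne', mul_pow, hb2]
    ring_nf
  rw [hintegrand, mul_zero, smul_eq_mul] at hsubst
  rw [dawson, hsubst]
  field_simp
  rw [hb2]
  ring

/-- Quadratic regime. If `m n / n² → c` then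
`P₂(m n, n)/n → √(2c) · D₊(1/√(2c))`. -/
theorem stmt8 (c : ℝ) (hc : 0 < c) (m : ℕ → ℕ)
    (hm : Tendsto (fun n : ℕ => (m n : ℝ) / (n : ℝ) ^ 2) atTop (nhds c)) :
    Tendsto (fun n : ℕ => P2 (m n) n / n) atTop
      (nhds (Real.sqrt (2 * c) * dawson (1 / Real.sqrt (2 * c)))) := by
  have hN : Tendsto (fun n : ℕ => ((n + m n - 2 : ℕ) : ℝ) / (n : ℝ) ^ 2) atTop (𝓝 c) := by
    refine (tendsto_natCast_add_add_div_sq hm (-2)).congr' ?_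
    filter_upwards [eventually_ge_atTop 2] with n hn
    rw [Nat.cast_sub (by omega)]
    push_cast
    ring
  rw [sqrt_two_mul_mul_dawson_one_div_sqrt hc]
  refine ((tendsto_natCast_add_add_div_sq hm (-1)).mul
    (tendsto_integral_Ioi_cos_div_pow_mul_sin hc hN)).congr' ?_
  filter_upwards [eventually_gt_atTop 0] with n hn
  have hscale (I : ℝ) : (n + m n + -1 : ℝ) / n ^ 2 * I = (n + m n - 1) * ((n : ℝ)⁻¹ * I) / n := by
    field_simp
    ring
  rw [P2, intervalIntegral_eq_inv_mul_integral_Ioi_indicator _ (Nat.cast_pos.mpr hn)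
    pi_div_two_pos.le]
  exact hscale _
end

section
/- Fix integers m ≥ 1 and 0 ≤ k ≤ n. Then ( Π_{i=0}^{k−1} (m+1+2i) ) · Σ_{R ∈ Φ_m^n} Σ_{b : Fin m → ℕ, Σ_j b(j) = k, b(j) ≤ R(j) for all j} Π_{j=1}^{m} C(R(j), b(j))² = C(n+m−1, n) · C(n, k) · Π_{i=0}^{k−1} (2(n−k)+m+1+2i). (Equivalently, Σ_R Σ_b Π_j C(R_j,b_j)² = C(n+m−1,n)·C(n,k)·(n−k+(m+1)/2)_k/((m+1)/2)_k.) -/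
/-!
Expanding `C(r, b)² = ∑ₜ C(r, b + t) C(b + t, 2t) C(2t, t)` in every coordinate, the sum over `R`
and then the sum over `b` are upper-index Vandermonde convolutions, and the double sum collapses to
`∑_T C(n+m-1, k+T+m-1) C(k+T+m-1, 2T+m-1) D_m(T)`, where
`D_m(T) = ∑_{τ ∈ Φ_m^T} ∏_j C(2τ_j, τ_j) = 4^T (m/2)_T / T!`.
In factorials this is a terminating `₂F₁(-k, -(n-k); (m+1)/2; 1)`, summed by the Chu–Vandermonde
identity `(x + a)_k = ∑_T C(k, T) a(a-1)⋯(a-T+1) (x + T)_{k-T}` at `x = (m+1)/2`, `a = n - k`.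
-/

open Finset Finset.Nat
open scoped Nat

namespace Finset.Nat

theorem sum_antidiagonalTuple_succ {M : Type*} [AddCommMonoid M] (k n : ℕ)
    (f : (Fin (k + 1) → ℕ) → M) :
    ∑ x ∈ antidiagonalTuple (k + 1) n, f x =
      ∑ ij ∈ antidiagonal n, ∑ y ∈ antidiagonalTuple k ij.2, f (Fin.cons ij.1 y) := by
  rw [Finset.sum_sigma']
  refine Finset.sum_bij' (fun x _ => ⟨(x 0, n - x 0), Fin.tail x⟩)
    (fun p _ => Fin.cons p.1.1 p.2) ?_ ?_ ?_ ?_ ?_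
  · intro x hx
    rw [mem_antidiagonalTuple, Fin.sum_univ_succ] at hx
    simp only [mem_sigma, HasAntidiagonal.mem_antidiagonal, mem_antidiagonalTuple, Fin.tail]
    omega
  · rintro ⟨⟨i, j⟩, y⟩ h
    simp only [mem_sigma, HasAntidiagonal.mem_antidiagonal, mem_antidiagonalTuple] at h
    simp [mem_antidiagonalTuple, Fin.sum_cons, h.2, h.1]
  · intro x _
    simp
  · rintro ⟨⟨i, j⟩, y⟩ h
    simp only [mem_sigma, HasAntidiagonal.mem_antidiagonal] at h
    simp [← h.1]
  · intro x _
    simp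

theorem le_of_mem_antidiagonalTuple {k n : ℕ} {x : Fin k → ℕ} (hx : x ∈ antidiagonalTuple k n)
    (j : Fin k) : x j ≤ n :=
  (mem_antidiagonalTuple.mp hx) ▸ single_le_sum (fun i _ => Nat.zero_le (x i)) (mem_univ j)

end Finset.Nat

theorem sum_antidiagonal_choose_mul_choose (N p q : ℕ) :
    ∑ ij ∈ antidiagonal N, ij.1.choose p * ij.2.choose q = (N + 1).choose (p + q + 1) := by
  induction N generalizing p with
  | zero => cases p <;> cases q <;> simp [Nat.choose_eq_zero_of_lt]
  | succ N ih =>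
    rw [Finset.Nat.sum_antidiagonal_succ]
    cases p with
    | zero =>
      have hockey := ih 0
      simp only [Nat.choose_zero_right, one_mul, zero_add] at hockey ⊢
      rw [hockey, Nat.choose_succ_succ' (N + 1)]
    | succ p =>
      have pascal : ∀ ij : ℕ × ℕ, (ij.1 + 1).choose (p + 1) * ij.2.choose q =
          ij.1.choose p * ij.2.choose q + ij.1.choose (p + 1) * ij.2.choose q := fun ij => by
        rw [Nat.choose_succ_succ', add_mul]
      rw [Nat.choose_zero_succ, zero_mul, zero_add, sum_congr rfl fun ij _ => pascal ij,
        sum_add_distrib, ih, ih, show p + 1 + q + 1 = (p + q + 1) + 1 by ring,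
        Nat.choose_succ_succ' (N + 1)]

theorem choose_add_succ_add_succ (x y s : ℕ) :
    (x + (s + 1)).choose (y + (s + 1)) = (x + s).choose (y + s) + (x + s).choose (y + 1 + s) := by
  rw [← add_assoc, ← add_assoc, Nat.choose_succ_succ', add_right_comm y 1 s]

theorem sum_antidiagonal_choose_add_mul_choose_add (N a b c d : ℕ) :
    ∑ ij ∈ antidiagonal N, (ij.1 + a).choose (b + a) * (ij.2 + c).choose (d + c) =
      (N + a + c + 1).choose (a + b + c + d + 1) := by
  induction a generalizing b with
  | zero =>
    induction c generalizing d with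
    | zero => simpa [add_comm b d] using sum_antidiagonal_choose_mul_choose N b d
    | succ c ih =>
      simp only [choose_add_succ_add_succ _ _ c, mul_add, sum_add_distrib, ih]
      rw [show N + 0 + (c + 1) + 1 = (N + 0 + c + 1) + 1 by ring,
        show 0 + b + (c + 1) + d + 1 = (0 + b + c + d + 1) + 1 by ring,
        show 0 + b + c + (d + 1) + 1 = (0 + b + c + d + 1) + 1 by ring]
      exact (Nat.choose_succ_succ' _ _).symm
  | succ a ih =>
    simp only [choose_add_succ_add_succ _ _ a, add_mul, sum_add_distrib, ih]
    rw [show N + (a + 1) + c + 1 = (N + a + c + 1) + 1 by ring,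
      show a + 1 + b + c + d + 1 = (a + b + c + d + 1) + 1 by ring,
      show a + (b + 1) + c + d + 1 = (a + b + c + d + 1) + 1 by ring]
    exact (Nat.choose_succ_succ' _ _).symm

theorem sum_antidiagonalTuple_prod_choose_add (M n : ℕ) (s c : Fin (M + 1) → ℕ) :
    ∑ R ∈ antidiagonalTuple (M + 1) n, ∏ j, (R j + s j).choose (c j + s j) =
      (n + ∑ j, s j + M).choose (∑ j, c j + ∑ j, s j + M) := by
  induction M generalizing n with
  | zero => simp
  | succ M ih =>
    simp only [Finset.Nat.sum_antidiagonalTuple_succ (M + 1), Fin.prod_univ_succ (n := M + 1),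
      Fin.cons_zero, Fin.cons_succ, ← mul_sum, ih, add_assoc]
    rw [sum_antidiagonal_choose_add_mul_choose_add, Fin.sum_univ_succ s, Fin.sum_univ_succ c]
    congr 1 <;> ring

theorem sum_antidiagonalTuple_prod_choose (M n : ℕ) (c : Fin (M + 1) → ℕ) :
    ∑ R ∈ antidiagonalTuple (M + 1) n, ∏ j, (R j).choose (c j) = (n + M).choose (∑ j, c j + M) := by
  simpa using sum_antidiagonalTuple_prod_choose_add M n 0 c

theorem choose_two_mul_mul_centralBinom (b t : ℕ) :
    (b + t).choose (2 * t) * t.centralBinom = (b + t).choose b * b.choose t := by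
  rw [Nat.centralBinom, Nat.choose_mul (by omega), Nat.add_sub_cancel, two_mul,
    Nat.add_sub_cancel, Nat.choose_symm_add]

theorem sum_range_choose_mul_choose (x b K : ℕ) (hb : b ≤ K) :
    ∑ t ∈ range (K + 1), x.choose t * b.choose t = (x + b).choose b := by
  rw [← sum_subset (range_subset_range.mpr (by omega : b + 1 ≤ K + 1)) fun t _ ht => by
      rw [Nat.choose_eq_zero_of_lt (n := b) (by simpa using ht), mul_zero],
    Nat.add_choose_eq, sum_antidiagonal_eq_sum_range_succ_mk]
  refine sum_congr rfl fun t ht => ?_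
  rw [Nat.choose_symm (by simpa [Nat.lt_succ_iff] using ht)]

theorem choose_sq_eq_sum (r b K : ℕ) (hb : b ≤ K) :
    r.choose b ^ 2 =
      ∑ t ∈ range (K + 1), r.choose (b + t) * ((b + t).choose (2 * t) * t.centralBinom) := by
  simp_rw [choose_two_mul_mul_centralBinom, ← mul_assoc, Nat.choose_mul (Nat.le_add_right b _),
    Nat.add_sub_cancel_left, mul_assoc, ← mul_sum, sum_range_choose_mul_choose _ _ _ hb]
  rcases le_or_gt b r with h | h
  · rw [Nat.sub_add_cancel h, sq]
  · simp [Nat.choose_eq_zero_of_lt h]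

theorem prod_choose_sq_eq_sum_piFinset {m : ℕ} (k : ℕ) (R b : Fin m → ℕ) (hb : ∀ j, b j ≤ k) :
    ∏ j, (R j).choose (b j) ^ 2 = ∑ t ∈ Fintype.piFinset fun _ : Fin m => range (k + 1),
      (∏ j, (R j).choose (b j + t j)) *
        ((∏ j, (b j + t j).choose (2 * t j)) * ∏ j, (t j).centralBinom) := by
  rw [prod_congr rfl fun j _ => choose_sq_eq_sum (R j) (b j) k (hb j), prod_univ_sum]
  simp_rw [prod_mul_distrib]

theorem sum_piFinset_range_eq_sum_antidiagonalTuple {M : Type*} [AddCommMonoid M] (m K : ℕ)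
    (g : (Fin m → ℕ) → M) (hg : ∀ t : Fin m → ℕ, K < ∑ j, t j → g t = 0) :
    ∑ t ∈ Fintype.piFinset fun _ : Fin m => range (K + 1), g t =
      ∑ T ∈ range (K + 1), ∑ t ∈ antidiagonalTuple m T, g t := by
  rw [← sum_filter_of_ne (p := fun t => ∑ j, t j ≤ K) fun t _ h => by
      by_contra hK
      exact h (hg t (by omega)),
    ← sum_fiberwise_of_maps_to (g := fun t => ∑ j, t j) (t := range (K + 1))
      fun t ht => by simpa [Nat.lt_succ_iff] using (mem_filter.mp ht).2]
  refine sum_congr rfl fun T hT => sum_congr ?_ fun _ _ => rfl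
  ext t
  rw [mem_range] at hT
  simp only [mem_filter, Fintype.mem_piFinset, mem_range, mem_antidiagonalTuple]
  refine ⟨fun h => h.2, fun h => ⟨⟨fun j => ?_, by omega⟩, h⟩⟩
  have := Finset.Nat.le_of_mem_antidiagonalTuple (mem_antidiagonalTuple.mpr h) j
  omega

/-- The coefficient of `x ^ T` in `(1 - 4x) ^ (-m/2)`. -/
def sumProdCentralBinom (m T : ℕ) : ℕ :=
  ∑ τ ∈ antidiagonalTuple m T, ∏ j, (τ j).centralBinom

theorem sum_sum_filter_prod_choose_sq (M n k : ℕ) :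
    ∑ R ∈ antidiagonalTuple (M + 1) n,
        ∑ b ∈ (antidiagonalTuple (M + 1) k).filter (fun b => ∀ j, b j ≤ R j),
          ∏ j, (R j).choose (b j) ^ 2 =
      ∑ T ∈ range (k + 1), (n + M).choose (k + T + M) * (k + T + M).choose (2 * T + M) *
        sumProdCentralBinom (M + 1) T := by
  set box := Fintype.piFinset fun _ : Fin (M + 1) => range (k + 1)
  calc _ = ∑ R ∈ antidiagonalTuple (M + 1) n, ∑ b ∈ antidiagonalTuple (M + 1) k,
          ∏ j, (R j).choose (b j) ^ 2 := by
        refine sum_congr rfl fun R _ => sum_filter_of_ne fun b _ hb j => ?_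
        by_contra hj
        exact hb (prod_eq_zero (mem_univ j) (by simp [Nat.choose_eq_zero_of_lt (not_le.mp hj)]))
    _ = ∑ b ∈ antidiagonalTuple (M + 1) k, ∑ t ∈ box, (n + M).choose (k + ∑ j, t j + M) *
          ((∏ j, (b j + t j).choose (2 * t j)) * ∏ j, (t j).centralBinom) := by
        rw [sum_comm]
        refine sum_congr rfl fun b hb => ?_
        simp_rw [prod_choose_sq_eq_sum_piFinset k _ b (le_of_mem_antidiagonalTuple hb)]
        rw [sum_comm]
        refine sum_congr rfl fun t _ => ?_
        rw [← sum_mul, sum_antidiagonalTuple_prod_choose, sum_add_distrib,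
          mem_antidiagonalTuple.mp hb]
    _ = ∑ t ∈ box, (n + M).choose (k + ∑ j, t j + M) *
          (k + ∑ j, t j + M).choose (2 * ∑ j, t j + M) * ∏ j, (t j).centralBinom := by
        rw [sum_comm]
        refine sum_congr rfl fun t _ => ?_
        simp_rw [← mul_sum, ← sum_mul, two_mul, sum_antidiagonalTuple_prod_choose_add, mul_assoc]
    _ = _ := by
        rw [sum_piFinset_range_eq_sum_antidiagonalTuple _ _ _ fun t ht => by
          rw [Nat.choose_eq_zero_of_lt (n := k + ∑ j, t j + M) (by omega), mul_zero, zero_mul]]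
        refine sum_congr rfl fun T _ => ?_
        rw [sumProdCentralBinom, mul_sum]
        refine sum_congr rfl fun t ht => ?_
        rw [mem_antidiagonalTuple.mp ht]

/-- For `h = 2` this is `2 ^ n (x/2)_n`, so half-integer Pochhammer symbols stay in `ℕ`. -/
def stepAscFactorial (h x n : ℕ) : ℕ :=
  ∏ i ∈ range n, (x + h * i)

section stepAscFactorial

variable (h : ℕ)

@[simp]
theorem stepAscFactorial_zero (x : ℕ) : stepAscFactorial h x 0 = 1 := rfl

theorem stepAscFactorial_succ (x n : ℕ) :
    stepAscFactorial h x (n + 1) = stepAscFactorial h x n * (x + h * n) :=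
  prod_range_succ _ _

theorem stepAscFactorial_succ' (x n : ℕ) :
    stepAscFactorial h x (n + 1) = x * stepAscFactorial h (x + h) n := by
  rw [stepAscFactorial, prod_range_succ', mul_comm, mul_zero, add_zero]
  exact congrArg _ (prod_congr rfl fun i _ => by ring)

theorem stepAscFactorial_add (x m n : ℕ) :
    stepAscFactorial h x (m + n) = stepAscFactorial h x m * stepAscFactorial h (x + h * m) n := by
  rw [stepAscFactorial, prod_range_add]
  exact congrArg _ (prod_congr rfl fun i _ => by ring)

theorem stepAscFactorial_pos {x : ℕ} (hx : 0 < x) (n : ℕ) : 0 < stepAscFactorial h x n :=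
  prod_pos fun _ _ => by omega

theorem stepAscFactorial_add_eq_sum (x y n : ℕ) :
    stepAscFactorial h (x + y) n = ∑ ij ∈ antidiagonal n,
      n.choose ij.1 * (stepAscFactorial h x ij.1 * stepAscFactorial h y ij.2) := by
  induction n with
  | zero => simp
  | succ n ih =>
    have pascal := sum_antidiagonal_choose_succ_mul (R := ℕ)
      (fun i j => stepAscFactorial h x i * stepAscFactorial h y j) n
    simp only [Nat.cast_id] at pascal
    rw [pascal, stepAscFactorial_succ, ih, sum_mul, ← sum_add_distrib]
    refine sum_congr rfl fun ij hij => ?_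
    rw [HasAntidiagonal.mem_antidiagonal] at hij
    rw [← Nat.choose_symm_of_eq_add hij.symm, stepAscFactorial_succ, stepAscFactorial_succ, ← hij]
    ring

theorem stepAscFactorial_add_mul_eq_sum (y a k : ℕ) :
    stepAscFactorial h (y + h * a) k = ∑ ij ∈ antidiagonal k, k.choose ij.1 *
      (h ^ ij.1 * a.descFactorial ij.1 * stepAscFactorial h (y + h * ij.1) ij.2) := by
  induction k generalizing y with
  | zero => simp
  | succ k ih =>
    have pascal := sum_antidiagonal_choose_succ_mul (R := ℕ)
      (fun i j => h ^ i * a.descFactorial i * stepAscFactorial h (y + h * i) j) k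
    simp only [Nat.cast_id] at pascal
    rw [pascal, stepAscFactorial_succ', add_right_comm, ih, mul_sum, ← sum_add_distrib]
    refine sum_congr rfl fun ij hij => ?_
    rw [HasAntidiagonal.mem_antidiagonal] at hij
    rw [← Nat.choose_symm_of_eq_add hij.symm, stepAscFactorial_succ', Nat.descFactorial_succ]
    rcases le_or_gt ij.1 a with hia | hia
    · obtain ⟨d, rfl⟩ := Nat.exists_eq_add_of_le hia
      rw [Nat.add_sub_cancel_left]
      ring_nf
    · simp [Nat.descFactorial_eq_zero_iff_lt.mpr hia]

end stepAscFactorial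

theorem factorial_mul_centralBinom (n : ℕ) :
    n ! * n.centralBinom = 2 ^ n * stepAscFactorial 2 1 n := by
  induction n with
  | zero => simp
  | succ n ih =>
    calc (n + 1)! * (n + 1).centralBinom = n ! * ((n + 1) * (n + 1).centralBinom) := by
          rw [Nat.factorial_succ]; ring
      _ = 2 * (2 * n + 1) * (n ! * n.centralBinom) := by
          rw [Nat.succ_mul_centralBinom_succ]; ring
      _ = _ := by rw [ih, stepAscFactorial_succ]; ring

theorem sumProdCentralBinom_succ (m T : ℕ) :
    sumProdCentralBinom (m + 1) T =
      ∑ ij ∈ antidiagonal T, ij.1.centralBinom * sumProdCentralBinom m ij.2 := by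
  simp only [sumProdCentralBinom, Finset.Nat.sum_antidiagonalTuple_succ, Fin.prod_univ_succ,
    Fin.cons_zero, Fin.cons_succ, mul_sum]

theorem factorial_mul_sumProdCentralBinom (m T : ℕ) :
    T ! * sumProdCentralBinom m T = 2 ^ T * stepAscFactorial 2 m T := by
  induction m generalizing T with
  | zero =>
    cases T with
    | zero => simp [sumProdCentralBinom]
    | succ T => simp [sumProdCentralBinom, stepAscFactorial_succ']
  | succ m ih =>
    rw [sumProdCentralBinom_succ, add_comm m, stepAscFactorial_add_eq_sum, mul_sum, mul_sum]
    refine sum_congr rfl fun ij hij => ?_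
    rw [HasAntidiagonal.mem_antidiagonal] at hij
    rw [← hij, ← Nat.add_choose_mul_factorial_mul_factorial, Nat.choose_symm_add]
    calc _ = (ij.1 + ij.2).choose ij.2 * (ij.1 ! * ij.1.centralBinom) *
          (ij.2 ! * sumProdCentralBinom m ij.2) := by ring
      _ = _ := by rw [factorial_mul_centralBinom, ih]; ring

theorem factorial_mul_stepAscFactorial_mul_stepAscFactorial (M T : ℕ) :
    M ! * stepAscFactorial 2 (M + 1) T * stepAscFactorial 2 (M + 2) T = (2 * T + M)! := by
  induction T with
  | zero => simp
  | succ T ih =>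
    rw [show 2 * (T + 1) + M = 2 * T + M + 1 + 1 by ring, Nat.factorial_succ, Nat.factorial_succ,
      ← ih, stepAscFactorial_succ, stepAscFactorial_succ]
    ring

theorem cast_sumProdCentralBinom_eq_div (M T : ℕ) :
    (sumProdCentralBinom (M + 1) T : ℚ) =
      2 ^ T * (2 * T + M)! / (T ! * M ! * stepAscFactorial 2 (M + 2) T) := by
  have hD := factorial_mul_sumProdCentralBinom (M + 1) T
  have := stepAscFactorial_pos 2 (by omega : 0 < M + 2) T
  rw [eq_div_iff (by positivity), ← factorial_mul_stepAscFactorial_mul_stepAscFactorial]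
  qify at hD
  push_cast
  linear_combination (M ! * (stepAscFactorial 2 (M + 2) T : ℚ)) * hD

theorem stepAscFactorial_mul_choose_mul_choose_mul_sumProdCentralBinom (M a k T : ℕ)
    (hT : T ≤ k) :
    stepAscFactorial 2 (M + 2) k * ((a + k + M).choose (k + T + M) *
        (k + T + M).choose (2 * T + M) * sumProdCentralBinom (M + 1) T) =
      (a + k + M).choose (a + k) * (a + k).choose k * (k.choose T *
        (2 ^ T * a.descFactorial T * stepAscFactorial 2 (M + 2 + 2 * T) (k - T))) := by
  rcases le_or_gt T a with hTa | hTa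
  swap
  · simp [Nat.choose_eq_zero_of_lt (by omega : a + k + M < k + T + M),
      Nat.descFactorial_eq_zero_iff_lt.mpr hTa]
  obtain ⟨k, rfl⟩ := Nat.exists_eq_add_of_le hT
  obtain ⟨a, rfl⟩ := Nat.exists_eq_add_of_le hTa
  have := stepAscFactorial_pos 2 (by omega : 0 < M + 2) T
  rw [stepAscFactorial_add, Nat.add_sub_cancel_left]
  have hdesc : ((T + a).descFactorial T : ℚ) = (T + a)! / a ! := by
    rw [eq_div_iff (by positivity), mul_comm]
    exact_mod_cast by simpa using Nat.factorial_mul_descFactorial (Nat.le_add_right T a)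
  qify
  rw [cast_sumProdCentralBinom_eq_div, hdesc,
    Nat.cast_choose ℚ (by omega : T + k + T + M ≤ T + a + (T + k) + M),
    Nat.cast_choose ℚ (by omega : 2 * T + M ≤ T + k + T + M),
    Nat.cast_choose ℚ (by omega : T + a + (T + k) ≤ T + a + (T + k) + M),
    Nat.cast_choose ℚ (by omega : T + k ≤ T + a + (T + k)),
    Nat.cast_choose ℚ (by omega : T ≤ T + k),
    show T + a + (T + k) + M - (T + k + T + M) = a by omega,
    show T + k + T + M - (2 * T + M) = k by omega,
    show T + a + (T + k) + M - (T + a + (T + k)) = M by omega,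
    show T + a + (T + k) - (T + k) = T + a by omega,
    show T + k - T = k by omega]
  field_simp

theorem stepAscFactorial_mul_sum_choose_mul_choose_mul_sumProdCentralBinom (M a k : ℕ) :
    stepAscFactorial 2 (M + 2) k *
        ∑ T ∈ range (k + 1), (a + k + M).choose (k + T + M) * (k + T + M).choose (2 * T + M) *
          sumProdCentralBinom (M + 1) T =
      (a + k + M).choose (a + k) * (a + k).choose k * stepAscFactorial 2 (M + 2 + 2 * a) k := by
  rw [mul_sum, sum_congr rfl fun T hT =>
      stepAscFactorial_mul_choose_mul_choose_mul_sumProdCentralBinom M a k T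
        (Nat.lt_succ_iff.mp (mem_range.mp hT)),
    ← mul_sum, stepAscFactorial_add_mul_eq_sum, sum_antidiagonal_eq_sum_range_succ_mk]

/-- Summing the irrep purities `g` over all Fock states:
`(Π_{i<k} (m+1+2i)) · Σ_{R ∈ Φ_m^n} Σ_{b ≤ R, Σb = k} Π_j C(R j, b j)²
  = C(n+m-1, n) · C(n, k) · Π_{i<k} (2(n-k)+m+1+2i)`. -/
theorem stmt10 (m n k : ℕ) (hm : 1 ≤ m) (hk : k ≤ n) :
    (∏ i ∈ Finset.range k, (m + 1 + 2 * i)) *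
        ∑ R ∈ Finset.Nat.antidiagonalTuple m n,
          ∑ b ∈ (Finset.Nat.antidiagonalTuple m k).filter (fun b => ∀ j, b j ≤ R j),
            ∏ j, ((R j).choose (b j)) ^ 2
      = (n + m - 1).choose n * n.choose k *
          ∏ i ∈ Finset.range k, (2 * (n - k) + m + 1 + 2 * i) := by
  obtain ⟨M, rfl⟩ := Nat.exists_eq_add_of_le' hm
  obtain ⟨a, rfl⟩ := Nat.exists_eq_add_of_le' hk
  rw [sum_sum_filter_prod_choose_sq]
  convert stepAscFactorial_mul_sum_choose_mul_choose_mul_sumProdCentralBinom M a k using 2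
  · exact prod_congr rfl fun i _ => by ring
  · rw [show a + k + (M + 1) - 1 = a + k + M by omega]
  · rw [Nat.add_sub_cancel]
    exact prod_congr rfl fun i _ => by ring
end

section
/- (Injectivity of the raising map.) Fix integers m ≥ 1 and k ≥ 1. The restricted raising map R_k : End(P_{k−1}) → End(P_k), T ↦ Σ_{s=1}^m x_s ∘ T ∘ ∂_s, is injective: if Σ_s x_s ∘ T ∘ ∂_s = Σ_s x_s ∘ T' ∘ ∂_s as endomorphisms of P_k, then T = T'. -/
open MvPolynomial

noncomputable section

/-- The `k`-photon sector `P_k`: homogeneous polynomials of degree `k` in `m` variables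
(the Bargmann realization of the `m`-mode bosonic Fock space). -/
abbrev P (m k : ℕ) : Submodule ℂ (MvPolynomial (Fin m) ℂ) :=
  homogeneousSubmodule (Fin m) ℂ k

lemma mulX_mem {m d : ℕ} (s : Fin m) {p : MvPolynomial (Fin m) ℂ} (hp : p ∈ P m d) :
    MvPolynomial.X s * p ∈ P m (d + 1) := by
  rw [mem_homogeneousSubmodule] at hp ⊢
  have := (isHomogeneous_X ℂ s).mul hp
  rwa [Nat.add_comm] at this

lemma degree_single_one {m : ℕ} (s : Fin m) : (Finsupp.single s 1).degree = 1 := by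
  rw [Finsupp.degree_apply, Finsupp.support_single_ne_zero _ one_ne_zero, Finset.sum_singleton,
    Finsupp.single_eq_same]

lemma pderiv_mem {m d : ℕ} (s : Fin m) {p : MvPolynomial (Fin m) ℂ}
    (hp : p ∈ P m (d + 1)) : MvPolynomial.pderiv s p ∈ P m d := by
  rw [mem_homogeneousSubmodule] at hp
  rw [as_sum p, map_sum]
  apply Submodule.sum_mem
  intro u hu
  rw [pderiv_monomial]
  by_cases h : u s = 0
  · simp [h]
  · rw [mem_homogeneousSubmodule]
    apply isHomogeneous_monomial
    have hle : Finsupp.single s 1 ≤ u :=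
      Finsupp.single_le_iff.mpr (Nat.one_le_iff_ne_zero.mpr h)
    have hsum : (u - Finsupp.single s 1) + Finsupp.single s 1 = u :=
      tsub_add_cancel_of_le hle
    have hdeg : u.degree = d + 1 := by
      have hc : coeff u p ≠ 0 := (mem_support_iff).mp hu
      have := hp hc
      rwa [Finsupp.degree_eq_weight_one]
    have hadd : (u - Finsupp.single s 1).degree + (Finsupp.single s 1).degree = u.degree := by
      simp_rw [Finsupp.degree_eq_weight_one]
      rw [← map_add, hsum]
    rw [degree_single_one] at hadd
    omega

/-- Multiplication by `x_s` as a linear map `P_d → P_{d+1}`. -/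
def xRes (m d : ℕ) (s : Fin m) : P m d →ₗ[ℂ] P m (d + 1) :=
  (LinearMap.mulLeft ℂ (MvPolynomial.X s)).restrict fun _q hq => mulX_mem s hq

/-- The partial derivative `∂_s` as a linear map `P_{d+1} → P_d`. -/
def dRes (m d : ℕ) (s : Fin m) : P m (d + 1) →ₗ[ℂ] P m d :=
  (MvPolynomial.pderiv s).toLinearMap.restrict fun _q hq => pderiv_mem s hq

/-- The restricted lowering map `L_{d+1} : End(P_{d+1}) → End(P_d)`,
`T ↦ Σ_s ∂_s ∘ T ∘ x_s`. -/
def Lres (m d : ℕ) :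
    Module.End ℂ (P m (d + 1)) →ₗ[ℂ] Module.End ℂ (P m d) where
  toFun T := ∑ s, dRes m d s ∘ₗ T ∘ₗ xRes m d s
  map_add' T T' := by
    rw [← Finset.sum_add_distrib]
    exact Finset.sum_congr rfl fun s _ => by
      rw [LinearMap.add_comp, LinearMap.comp_add]
  map_smul' c T := by
    simp [Finset.smul_sum, LinearMap.smul_comp, LinearMap.comp_smul]

/-- The restricted raising map `R_{d+1} : End(P_d) → End(P_{d+1})`,
`T ↦ Σ_s x_s ∘ T ∘ ∂_s`. -/
def Rres (m d : ℕ) :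
    Module.End ℂ (P m d) →ₗ[ℂ] Module.End ℂ (P m (d + 1)) where
  toFun T := ∑ s, xRes m d s ∘ₗ T ∘ₗ dRes m d s
  map_add' T T' := by
    rw [← Finset.sum_add_distrib]
    exact Finset.sum_congr rfl fun s _ => by
      rw [LinearMap.add_comp, LinearMap.comp_add]
  map_smul' c T := by
    simp [Finset.smul_sum, LinearMap.smul_comp, LinearMap.comp_smul]

end

/-!
The monomials `x^u` with `|u| = j` form a basis of `P_j`, so it suffices to show that `R(E) = 0`
forces `E(x^u) = 0`. Fix a variable `x_z` and evaluate `R(E)` at `x^u x_z`: the term `s = z` is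
`(u_z + 1) x_z E(x^u)`, and every other term is a multiple of `x_s E(x^w)` with `w_z = u_z + 1`.
By downward induction on `u_z` those terms vanish, hence so does `x_z E(x^u)`, and with it
`E(x^u)`.
-/

namespace MvPolynomial

variable (σ R : Type*) [CommSemiring R]

lemma restrictSupport_degree_eq_homogeneousSubmodule (d : ℕ) :
    restrictSupport R {u : σ →₀ ℕ | u.degree = d} = homogeneousSubmodule σ R d :=
  (homogeneousSubmodule_eq_finsupp_supported σ R d).symm

noncomputable def basisHomogeneousSubmodule (d : ℕ) :
    Module.Basis {u : σ →₀ ℕ | u.degree = d} R (homogeneousSubmodule σ R d) :=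
  (basisRestrictSupport R _).map
    (LinearEquiv.ofEq _ _ (restrictSupport_degree_eq_homogeneousSubmodule σ R d))

variable {σ R}

@[simp]
lemma coe_basisHomogeneousSubmodule_apply {d : ℕ} (u : {u : σ →₀ ℕ | u.degree = d}) :
    (basisHomogeneousSubmodule σ R d u : MvPolynomial σ R) = monomial u 1 := by
  rw [basisHomogeneousSubmodule, Module.Basis.map_apply, LinearEquiv.coe_ofEq_apply]
  show (((AddMonoidAlgebra.supportedEquivFinsupp (R := R) (S := R) _).symm
    (Finsupp.single u 1) : AddMonoidAlgebra R (σ →₀ ℕ)) : MvPolynomial σ R) = _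
  simp [AddMonoidAlgebra.supportedEquivFinsupp, single_eq_monomial]

end MvPolynomial

lemma Finsupp.degree_tsub_single_one_add_one {σ : Type*} {v : σ →₀ ℕ} {s : σ}
    (hs : v s ≠ 0) : (v - single s 1).degree + 1 = v.degree := by
  have hle : single s 1 ≤ v := single_le_iff.mpr (Nat.one_le_iff_ne_zero.mpr hs)
  calc (v - single s 1).degree + 1 = (v - single s 1 + single s 1).degree := by
        rw [map_add, degree_single]
    _ = v.degree := by rw [tsub_add_cancel_of_le hle]

lemma Finsupp.add_le_degree {σ : Type*} [Fintype σ] (f : σ →₀ ℕ) {i j : σ} (hij : i ≠ j) :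
    f i + f j ≤ f.degree := by
  rw [degree_eq_sum]
  exact Finset.add_le_sum (fun _ _ => Nat.zero_le _) (Finset.mem_univ i) (Finset.mem_univ j)
    hij

open Finsupp (single)

variable {m : ℕ}

local notation "𝔟" => basisHomogeneousSubmodule (Fin m) ℂ

lemma dRes_basis_of_apply_eq_zero {d : ℕ} (s : Fin m) {v : Fin m →₀ ℕ}
    (hv : v.degree = d + 1) (hs : v s = 0) : dRes m d s (𝔟 (d + 1) ⟨v, hv⟩) = 0 :=
  Subtype.ext (by simp [dRes, hs])

lemma dRes_basis_of_apply_ne_zero {d : ℕ} (s : Fin m) {v : Fin m →₀ ℕ}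
    (hv : v.degree = d + 1) (hs : v s ≠ 0) :
    dRes m d s (𝔟 (d + 1) ⟨v, hv⟩) = (v s : ℂ) • 𝔟 d ⟨v - single s 1,
      Nat.add_right_cancel ((Finsupp.degree_tsub_single_one_add_one hs).trans hv)⟩ :=
  Subtype.ext (by simp [dRes, smul_monomial])

lemma coe_Rres_apply {j : ℕ} (E : Module.End ℂ (P m j)) (p : P m (j + 1)) :
    (Rres m j E p : MvPolynomial (Fin m) ℂ) =
      ∑ s, X s * (E (dRes m j s p) : MvPolynomial (Fin m) ℂ) := by
  simp only [Rres, LinearMap.coe_mk, AddHom.coe_mk, LinearMap.sum_apply, LinearMap.comp_apply,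
    Submodule.coe_sum]
  rfl

lemma apply_basis_eq_zero_of_Rres_eq_zero {j : ℕ} {E : Module.End ℂ (P m j)}
    (hE : Rres m j E = 0) (z : Fin m) (u : Fin m →₀ ℕ) (hu : u.degree = j) :
    E (𝔟 j ⟨u, hu⟩) = 0 := by
  induction hn : j - u z using Nat.strong_induction_on generalizing u with
  | _ n ih =>
  have hv : (u + single z 1).degree = j + 1 := by simpa using hu
  have hother : ∀ s ≠ z, E (dRes m j s (𝔟 (j + 1) ⟨_, hv⟩)) = 0 := by
    intro s hs
    by_cases hvs : (u + single z 1 : Fin m →₀ ℕ) s = 0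
    · rw [dRes_basis_of_apply_eq_zero s hv hvs, map_zero]
    · rw [dRes_basis_of_apply_ne_zero s hv hvs, map_smul, ih _ ?_ _ _ rfl, smul_zero]
      have hus : u s ≠ 0 := by simpa [hs.symm] using hvs
      have hsum : u z + u s ≤ j := hu ▸ Finsupp.add_le_degree u hs.symm
      have hwz : (u + single z 1 - single s 1 : Fin m →₀ ℕ) z = u z + 1 := by
        simp [hs]
      omega
  have hz : dRes m j z (𝔟 (j + 1) ⟨_, hv⟩) = ((u z + 1 : ℕ) : ℂ) • 𝔟 j ⟨u, hu⟩ := by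
    rw [dRes_basis_of_apply_ne_zero z hv (by simp)]
    congr 2 <;> simp
  have hRes := congr(($hE (𝔟 (j + 1) ⟨_, hv⟩) : MvPolynomial (Fin m) ℂ))
  rw [coe_Rres_apply, Finset.sum_eq_single z
    (fun s _ hs => by rw [hother s hs, ZeroMemClass.coe_zero, mul_zero]) (by simp), hz,
    map_smul] at hRes
  simpa [X_ne_zero, Nat.cast_add_one_ne_zero] using hRes

theorem Rres_injective [NeZero m] (j : ℕ) : Function.Injective (Rres m j) := by
  intro T T' h
  have hE : Rres m j (T - T') = 0 := by rw [map_sub (Rres m j) T T', h, sub_self]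
  refine sub_eq_zero.1 ((𝔟 j).ext fun u => ?_)
  rw [apply_basis_eq_zero_of_Rres_eq_zero hE 0 u.1 u.2, LinearMap.zero_apply]

/-- Injectivity of the raising map. For `m ≥ 1` and `k ≥ 1`
(here `k = j + 1`), the restricted raising map `R_k : End(P_{k−1}) → End(P_k)`,
`T ↦ Σ_s x_s ∘ T ∘ ∂_s`, is injective. -/
theorem stmt14 (m j : ℕ) (hm : 1 ≤ m)
    (T T' : Module.End ℂ (P m j)) (h : Rres m j T = Rres m j T') :
    T = T' :=
  have : NeZero m := ⟨Nat.one_le_iff_ne_zero.mp hm⟩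
  Rres_injective j h
end

section
/- (Bosonic birthday paradox at the quadratic threshold.) Let c > 0 be a real and let m : ℕ → ℕ be a sequence with m(n)/n² → c. Then the fraction of collision-free configurations among all n-photon, m(n)-mode configurations converges: C(m(n), n) / C(m(n)+n−1, n) → exp(−1/c) as n → ∞. -/
/-!
Multiplying numerator and denominator by `n!` turns the ratio into
`∏_{k<n} (m - k) / (m + k)`. By `1 + t ≤ exp t`, each factor lies between `exp (-2k / (m - n))`
and `exp (-2k / (m + n))`, so the product lies between `exp (-n(n-1) / (m ∓ n))`, and both
exponents tend to `-1/c` when `m ~ c n²`.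
-/

open Filter Finset Real Topology
open scoped Nat

lemma cast_choose_div_choose_add_sub_one (m n : ℕ) :
    (m.choose n : ℝ) / ((m + n - 1).choose n : ℝ) =
      ∏ k ∈ range n, ((m : ℝ) - k) / ((m : ℝ) + k) := by
  have hfac : (n ! : ℝ) ≠ 0 := by positivity
  rw [← mul_div_mul_left _ _ hfac, prod_div_distrib, ← Nat.cast_mul, ← Nat.cast_mul,
    ← Nat.descFactorial_eq_factorial_mul_choose, ← Nat.ascFactorial_eq_factorial_mul_choose',
    ← descPochhammer_eval_eq_descFactorial, descPochhammer_eval_eq_prod_range,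
    Nat.ascFactorial_eq_prod_range]
  push_cast
  rfl

lemma sum_range_two_mul_natCast (n : ℕ) : ∑ k ∈ range n, 2 * (k : ℝ) = n * (n - 1) := by
  induction n with
  | zero => simp
  | succ n ih => rw [sum_range_succ, ih]; push_cast; ring

lemma prod_range_exp_neg_two_mul_div (n : ℕ) (a : ℝ) :
    ∏ k ∈ range n, exp (-(2 * k / a)) = exp (-(n * (n - 1) / a)) := by
  rw [← exp_sum, sum_neg_distrib, ← sum_div, sum_range_two_mul_natCast]

lemma sub_div_add_le_exp {x k N : ℝ} (hk : 0 ≤ k) (hkN : k ≤ N) (hxk : 0 < x + k) :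
    (x - k) / (x + k) ≤ exp (-(2 * k / (x + N))) :=
  calc (x - k) / (x + k) = -(2 * k / (x + k)) + 1 := by field_simp; ring
    _ ≤ exp (-(2 * k / (x + k))) := add_one_le_exp _
    _ ≤ exp (-(2 * k / (x + N))) := by gcongr

lemma exp_le_sub_div_add {x k N : ℝ} (hk : 0 ≤ k) (hkN : k ≤ N) (hNx : N < x) :
    exp (-(2 * k / (x - N))) ≤ (x - k) / (x + k) := by
  have hxk : 0 < x - k := by linarith
  rw [exp_neg, inv_le_comm₀ (exp_pos _) (div_pos hxk (by linarith)), inv_div]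
  calc (x + k) / (x - k) = 2 * k / (x - k) + 1 := by field_simp; ring
    _ ≤ 2 * k / (x - N) + 1 := by gcongr
    _ ≤ exp (2 * k / (x - N)) := add_one_le_exp _

lemma prod_range_sub_div_add_le_exp {x : ℝ} {n : ℕ} (hn : (n : ℝ) ≤ x) :
    ∏ k ∈ range n, (x - k) / (x + k) ≤ exp (-(n * (n - 1) / (x + n))) := by
  rw [← prod_range_exp_neg_two_mul_div]
  refine prod_le_prod (fun k hk => ?_) (fun k hk => ?_) <;>
    have hk : (k : ℝ) < n := by exact_mod_cast mem_range.mp hk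
  · exact div_nonneg (by linarith) (by linarith [k.cast_nonneg (α := ℝ)])
  · exact sub_div_add_le_exp k.cast_nonneg hk.le (by linarith [k.cast_nonneg (α := ℝ)])

lemma exp_le_prod_range_sub_div_add {x : ℝ} {n : ℕ} (hn : (n : ℝ) < x) :
    exp (-(n * (n - 1) / (x - n))) ≤ ∏ k ∈ range n, (x - k) / (x + k) := by
  rw [← prod_range_exp_neg_two_mul_div]
  refine prod_le_prod (fun k _ => (exp_pos _).le) (fun k hk => ?_)
  exact exp_le_sub_div_add k.cast_nonneg (by exact_mod_cast (mem_range.mp hk).le) hn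

section Asymptotics

variable {a : ℕ → ℝ} {c : ℝ} (ha : Tendsto (fun n : ℕ => a n / (n : ℝ) ^ 2) atTop (𝓝 c))
include ha

lemma eventually_natCast_lt_of_tendsto_div_sq (hc : 0 < c) :
    ∀ᶠ n : ℕ in atTop, (n : ℝ) < a n := by
  filter_upwards [(ha.pos_mul_atTop hc tendsto_natCast_atTop_atTop).eventually_gt_atTop 1,
    eventually_gt_atTop 0] with n h hn
  have hn : (0 : ℝ) < n := by exact_mod_cast hn
  rwa [sq, ← div_div, div_mul_cancel₀ _ hn.ne', one_lt_div hn] at h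

lemma tendsto_add_mul_div_sq (ε : ℝ) :
    Tendsto (fun n : ℕ => (a n + ε * n) / (n : ℝ) ^ 2) atTop (𝓝 c) := by
  have h := ha.add ((tendsto_one_div_atTop_nhds_zero_nat (𝕜 := ℝ)).const_mul ε)
  rw [mul_zero, add_zero] at h
  refine h.congr' ?_
  filter_upwards [eventually_ne_atTop 0] with n hn
  field_simp

lemma tendsto_mul_sub_one_div (hc : c ≠ 0) :
    Tendsto (fun n : ℕ => n * (n - 1) / a n) atTop (𝓝 (1 / c)) := by
  have h : Tendsto (fun n : ℕ => 1 - 1 / (n : ℝ)) atTop (𝓝 1) := by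
    simpa using tendsto_const_nhds.sub (tendsto_one_div_atTop_nhds_zero_nat (𝕜 := ℝ))
  refine (h.div ha hc).congr' ?_
  filter_upwards [eventually_ne_atTop 0] with n hn
  rw [Pi.div_apply, div_div_eq_mul_div]
  congr 1
  field_simp

end Asymptotics

/-- Bosonic birthday paradox at the quadratic threshold.
If `m n / n² → c > 0`, the fraction of collision-free configurations among all
`n`-photon, `m n`-mode configurations tends to `exp(−1/c)`. -/
theorem stmt19 (c : ℝ) (hc : 0 < c) (m : ℕ → ℕ)
    (hm : Tendsto (fun n : ℕ => (m n : ℝ) / (n : ℝ) ^ 2) atTop (nhds c)) :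
    Tendsto (fun n : ℕ => ((m n).choose n : ℝ) / ((m n + n - 1).choose n : ℝ)) atTop
      (nhds (Real.exp (-1 / c))) := by
  have hbound (ε : ℝ) : Tendsto (fun n : ℕ => exp (-(n * (n - 1) / (m n + ε * n)))) atTop
      (𝓝 (exp (-1 / c))) := by
    rw [neg_div]
    exact (tendsto_mul_sub_one_div (tendsto_add_mul_div_sq hm ε) hc.ne').neg.rexp
  refine tendsto_of_tendsto_of_tendsto_of_le_of_le' (hbound (-1)) (hbound 1) ?_ ?_ <;>
    filter_upwards [eventually_natCast_lt_of_tendsto_div_sq hm hc] with n hn <;>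
    rw [cast_choose_div_choose_add_sub_one]
  · simpa [sub_eq_add_neg] using exp_le_prod_range_sub_div_add hn
  · simpa using prod_range_sub_div_add_le_exp hn.le
end
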